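/- arXiv:2309.01980 — 2 statements merged into one kernel-verified Lean document; each statement's English description precedes it below -/
import Mathlib

section
/- Let {(x^k, z^k, y^k)} be a sequence generated by the safeguarded implicit augmented Lagrangian algorithm for problem (P) with ε_k → 0. Assume the approximate global optimality condition L_{μ_k}(x^k, ŷ^k) ≤ L_{μ_k}(x, ŷ^k) + ε_k for all x ∈ ℝ^n and all k, that dom g is closed, and that the safeguarding rule ŷ^{k+1} = 0 is used whenever y^k ∉ Y. Let x̄ be an accumulation point of {x^k}. Then x̄ is a global minimizer of x ↦ dist(c(x), dom g), and for every (x, z) ∈ ℝ^n × dom g with ‖c(x) − z‖ = dist(c(x̄), dom g) one has limsup_{k→∞} ( f(x^k) + g(z^k) ) ≤ f(x) + g(z). -/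
/-!
Either the penalty parameters are eventually constant, and then the sufficient-decrease test
forces `‖c(xᵏ) - zᵏ‖ → 0`, or `μₖ → 0`. Comparing `L_{μₖ}(·, ŷᵏ)` at `xᵏ` and at any `x`, through
the prox point `zᵏ` and any `z ∈ dom g`, gives
`f(xᵏ) + g(zᵏ) + ‖c(xᵏ) - zᵏ + μₖŷᵏ‖²/(2μₖ) ≤ f(x) + g(z) + ‖c(x) - z + μₖŷᵏ‖²/(2μₖ) + εₖ`.
In the first case `dist(c(xᵏ), dom g) ≤ ‖c(xᵏ) - zᵏ‖ → 0`, so `dist(c(x̄), dom g) = 0`. In the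
second, multiplying by `2μₖ` and bounding `g(zᵏ)` below by prox-boundedness, the limit along the
subsequence gives `dist(c(x̄), dom g) ≤ ‖c(x) - z‖`.

Hence `d := dist(c(x̄), dom g) ≤ ‖c(xᵏ) - zᵏ‖` for every `k`, and when `‖c(x) - z‖ = d` the
difference of the two penalty terms above is asymptotically nonpositive: it is `O(‖c(xᵏ) - zᵏ‖)`
or `O(μₖ)` if `d = 0`, while if `d > 0` the multipliers `yᵏ` blow up, so the safeguard eventually
resets `ŷᵏ = 0`.
-/

open Filter Topology Bornology

noncomputable section

/-- Euclidean space `ℝ^d`. -/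
abbrev Euc (d : ℕ) := EuclideanSpace ℝ (Fin d)

namespace Paper

variable {n m : ℕ}

/-- The effective domain of an extended-real-valued function. -/
def edom (g : Euc m → EReal) : Set (Euc m) := {z | g z < ⊤}

/-- `g` maps into `ℝ ∪ {∞}` and is proper (its domain is nonempty). -/
def ProperFn (g : Euc m → EReal) : Prop := (∀ z, g z ≠ ⊥) ∧ ∃ z, g z < ⊤

/-- `z ↦ g z + ‖z‖²/(2μ)` is bounded below. -/
def ProxBoundedWith (g : Euc m → EReal) (μ : ℝ) : Prop :=
  ∃ b : ℝ, ∀ z, (b : EReal) ≤ g z + ((‖z‖ ^ 2 / (2 * μ) : ℝ) : EReal)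

/-- `g` is prox-bounded. -/
def ProxBounded (g : Euc m → EReal) : Prop := ∃ μ : ℝ, 0 < μ ∧ ProxBoundedWith g μ

/-- `0 < μ < μ_g`, where `μ_g` is the threshold of prox-boundedness of `g`. -/
def BelowThreshold (g : Euc m → EReal) (μ : ℝ) : Prop :=
  0 < μ ∧ ∃ μ' : ℝ, μ < μ' ∧ ProxBoundedWith g μ'

/-- The tangent cone to `Ω` at `wbar`. -/
def tangentCone {E : Type*} [NormedAddCommGroup E] [NormedSpace ℝ E]
    (Ω : Set E) (wbar : E) : Set E :=
  {v | ∃ (t : ℕ → ℝ) (w : ℕ → E), (∀ k, 0 < t k) ∧ Tendsto t atTop (𝓝 0) ∧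
        Tendsto w atTop (𝓝 v) ∧ ∀ k, wbar + t k • w k ∈ Ω}

/-- The regular (Fréchet) subdifferential of `g` at `zbar`. -/
def regSubdiff (g : Euc m → EReal) (zbar : Euc m) : Set (Euc m) :=
  {v | 0 ≤ liminf (fun z : Euc m =>
      (g z - g zbar - ((inner ℝ v (z - zbar) : ℝ) : EReal)) / ((‖z - zbar‖ : ℝ) : EReal))
      (𝓝[≠] zbar)}

/-- The limiting (Mordukhovich) subdifferential of `g` at `zbar`. -/
def limSubdiff (g : Euc m → EReal) (zbar : Euc m) : Set (Euc m) :=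
  {v | ∃ zs vs : ℕ → Euc m, Tendsto zs atTop (𝓝 zbar) ∧
        Tendsto (fun k => g (zs k)) atTop (𝓝 (g zbar)) ∧
        Tendsto vs atTop (𝓝 v) ∧ ∀ k, vs k ∈ regSubdiff g (zs k)}

/-- The subderivative `dg(zbar)(v)`. -/
def subderiv (g : Euc m → EReal) (zbar v : Euc m) : EReal :=
  liminf (fun p : ℝ × Euc m => (g (zbar + p.1 • p.2) - g zbar) / ((p.1 : ℝ) : EReal))
    ((𝓝[>] (0 : ℝ)) ×ˢ 𝓝 v)

/-- The second subderivative `d²g(zbar, ybar)(v)`. -/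
def secondSubderiv (g : Euc m → EReal) (zbar ybar v : Euc m) : EReal :=
  liminf (fun p : ℝ × Euc m =>
      (g (zbar + p.1 • p.2) - g zbar - ((p.1 * (inner ℝ ybar p.2 : ℝ) : ℝ) : EReal)) /
        ((p.1 ^ 2 / 2 : ℝ) : EReal))
    ((𝓝[>] (0 : ℝ)) ×ˢ 𝓝 v)

/-- The Lagrangian `L(·, y) = f + ⟨y, c ·⟩` of (P). -/
def LagFn (f : Euc n → ℝ) (c : Euc n → Euc m) (y : Euc m) : Euc n → ℝ :=
  fun x => f x + (inner ℝ y (c x) : ℝ)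

/-- `∇ₓL(xbar, y) = 0`. -/
def gradLagZero (f : Euc n → ℝ) (c : Euc n → Euc m) (xbar : Euc n) (y : Euc m) : Prop :=
  fderiv ℝ (LagFn f c y) xbar = 0

/-- The set `Λ(xbar)` of Lagrange multipliers of the M-stationarity system at `xbar`. -/
def Lambda (f : Euc n → ℝ) (c : Euc n → Euc m) (g : Euc m → EReal) (xbar : Euc n) :
    Set (Euc m) :=
  {y | gradLagZero f c xbar y ∧ y ∈ limSubdiff g (c xbar)}

/-- `∇²ₓₓL(xbar, y)[u, w]`. -/
def hessLag (f : Euc n → ℝ) (c : Euc n → Euc m) (xbar : Euc n) (y : Euc m) (u w : Euc n) : ℝ :=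
  iteratedFDeriv ℝ 2 (LagFn f c y) xbar ![u, w]

/-- The critical cone `C(xbar)` of (P). -/
def critCone (f : Euc n → ℝ) (c : Euc n → Euc m) (g : Euc m → EReal) (xbar : Euc n) :
    Set (Euc n) :=
  {u | ((fderiv ℝ f xbar u : ℝ) : EReal) + subderiv g (c xbar) (fderiv ℝ c xbar u) ≤ 0}

/-- The directional multiplier set `Λ(xbar, u)`. -/
def dirLambda (f : Euc n → ℝ) (c : Euc n → Euc m) (g : Euc m → EReal) (xbar : Euc n)
    (u : Euc n) : Set (Euc m) :=
  {y | gradLagZero f c xbar y ∧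
    subderiv g (c xbar) (fderiv ℝ c xbar u) = ((inner ℝ y (fderiv ℝ c xbar u) : ℝ) : EReal) ∧
    secondSubderiv g (c xbar) y (fderiv ℝ c xbar u) ≠ ⊥}

/-- The second-order sufficient condition (SOSC) for (P) at `xbar`. -/
def SOSC (f : Euc n → ℝ) (c : Euc n → Euc m) (g : Euc m → EReal) (xbar : Euc n) : Prop :=
  ∀ u ∈ critCone f c g xbar, u ≠ 0 → ∃ y ∈ dirLambda f c g xbar u,
    0 < ((hessLag f c xbar y u u : ℝ) : EReal) + secondSubderiv g (c xbar) y (fderiv ℝ c xbar u)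

/-- The stationarity residual `Θ(x, z, y)`; the distance to the (possibly empty)
subdifferential is taken in `EReal` via an infimum. -/
def Theta (f : Euc n → ℝ) (c : Euc n → Euc m) (g : Euc m → EReal)
    (x : Euc n) (z y : Euc m) : EReal :=
  ((‖fderiv ℝ (LagFn f c y) x‖ + ‖c x - z‖ : ℝ) : EReal) +
    ⨅ v ∈ limSubdiff g z, ((‖y - v‖ : ℝ) : EReal)

/-- The graphical derivative `D(∂g)(zbar, ybar)(v)` of the limiting subdifferential mapping. -/
def gDeriv (g : Euc m → EReal) (zbar ybar v : Euc m) : Set (Euc m) :=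
  {η | (v, η) ∈ tangentCone {p : Euc m × Euc m | p.2 ∈ limSubdiff g p.1} (zbar, ybar)}

/-- The Moreau envelope `g^μ(w)`. -/
def moreau (g : Euc m → EReal) (μ : ℝ) (w : Euc m) : EReal :=
  ⨅ z, (g z + ((‖z - w‖ ^ 2 / (2 * μ) : ℝ) : EReal))

/-- The augmented Lagrangian `L_μ(x, y)` of (P). -/
def ALfun (f : Euc n → ℝ) (c : Euc n → Euc m) (g : Euc m → EReal) (μ : ℝ)
    (x : Euc n) (y : Euc m) : EReal :=
  (f x : EReal) + moreau g μ (c x + μ • y) - ((μ / 2 * ‖y‖ ^ 2 : ℝ) : EReal)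

/-- `xbar` is a strict local minimizer of (P). -/
def StrictLocalMin (f : Euc n → ℝ) (c : Euc n → Euc m) (g : Euc m → EReal)
    (xbar : Euc n) : Prop :=
  c xbar ∈ edom g ∧ ∃ ρ : ℝ, 0 < ρ ∧ ∀ x : Euc n, ‖x - xbar‖ ≤ ρ → c x ∈ edom g → x ≠ xbar →
    (f xbar : EReal) + g (c xbar) < (f x : EReal) + g (c x)

open Classical in
/-- A sequence generated by the safeguarded implicit augmented Lagrangian method
(Algorithm 4.1) for problem (P). -/
structure ALMSeq (n m : ℕ) (f : Euc n → ℝ) (c : Euc n → Euc m) (g : Euc m → EReal) where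
  /-- sufficient-decrease parameter -/
  θ : ℝ
  /-- penalty-reduction parameter -/
  κ : ℝ
  hθ : 0 < θ ∧ θ < 1
  hκ : 0 < κ ∧ κ < 1
  /-- safeguarding set -/
  Y : Set (Euc m)
  hYne : Y.Nonempty
  hYbdd : IsBounded Y
  /-- primal iterates -/
  x : ℕ → Euc n
  /-- auxiliary (certificate) iterates -/
  z : ℕ → Euc m
  /-- safeguarded multiplier estimates -/
  yhat : ℕ → Euc m
  /-- multiplier iterates -/
  y : ℕ → Euc m
  /-- penalty parameters -/
  μ : ℕ → ℝ
  /-- inner tolerances -/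
  ε : ℕ → ℝ
  hyhatY : ∀ k, yhat k ∈ Y
  hεnn : ∀ k, 0 ≤ ε k
  hμthr : ∀ k, BelowThreshold g (μ k)
  /-- `z k ∈ prox_{μ_k g}(c(x^k) + μ_k ŷ^k)` -/
  hprox : ∀ k, ∀ w : Euc m,
    g (z k) + ((‖z k - (c (x k) + μ k • yhat k)‖ ^ 2 / (2 * μ k) : ℝ) : EReal) ≤
      g w + ((‖w - (c (x k) + μ k • yhat k)‖ ^ 2 / (2 * μ k) : ℝ) : EReal)
  /-- dual update rule -/
  hy : ∀ k, y k = yhat k + (μ k)⁻¹ • (c (x k) - z k)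
  /-- approximate stationarity for the subproblem, `‖∇ₓL^S_{μ_k}(x^k,z^k,ŷ^k)‖ ≤ ε_k` -/
  hdual : ∀ k, ‖fderiv ℝ (LagFn f c (y k)) (x k)‖ ≤ ε k
  /-- penalty update rule -/
  hμupd : ∀ k, μ (k + 1) =
    if k = 0 ∨ ‖c (x k) - z k‖ ≤ θ * ‖c (x (k - 1)) - z (k - 1)‖ then μ k else κ * μ k

end Paper

open scoped InnerProductSpace

theorem tendsto_zero_of_antitone_of_frequently_le_mul {u : ℕ → ℝ} {κ : ℝ} (hκ : κ < 1)
    (hu0 : ∀ k, 0 ≤ u k) (hu : Antitone u) (hfreq : ∃ᶠ k in atTop, u (k + 1) ≤ κ * u k) :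
    Tendsto u atTop (𝓝 0) := by
  have hlim := tendsto_atTop_ciInf hu ⟨0, Set.forall_mem_range.2 hu0⟩
  set L := ⨅ k, u k
  have hL0 : 0 ≤ L := le_ciInf hu0
  -- `L ≤ u (k + 1) ≤ κ u k → κ L` along the frequent indices
  have hLκ : L ≤ κ * L := by
    by_contra! hlt
    have hev : ∀ᶠ k in atTop, κ * u k < L := (hlim.const_mul κ).eventually (gt_mem_nhds hlt)
    obtain ⟨k, hk, hκk⟩ := (hfreq.and_eventually hev).exists
    exact (ciInf_le ⟨0, Set.forall_mem_range.2 hu0⟩ (k + 1)).not_gt (hk.trans_lt hκk)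
  rwa [show L = 0 by nlinarith] at hlim

theorem norm_add_smul_sq {E : Type*} [NormedAddCommGroup E] [InnerProductSpace ℝ E]
    (a y : E) (μ : ℝ) : ‖a + μ • y‖ ^ 2 = ‖a‖ ^ 2 + 2 * μ * ⟪a, y⟫_ℝ + μ ^ 2 * ‖y‖ ^ 2 := by
  rw [norm_add_sq_real, inner_smul_right, norm_smul, mul_pow, Real.norm_eq_abs, sq_abs]
  ring

theorem sq_norm_add_smul_sub_le {E : Type*} [NormedAddCommGroup E] [InnerProductSpace ℝ E]
    {a b : E} (y : E) {μ : ℝ} (hμ : 0 < μ) (hab : ‖a‖ ≤ ‖b‖) :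
    (‖a + μ • y‖ ^ 2 - ‖b + μ • y‖ ^ 2) / (2 * μ) ≤ (‖a‖ + ‖b‖) * ‖y‖ := by
  rw [div_le_iff₀ (by positivity), norm_add_smul_sq, norm_add_smul_sq]
  have ha := real_inner_le_norm a y
  have hb := neg_le_of_abs_le (abs_real_inner_le_norm b y)
  nlinarith [mul_le_mul hab hab (norm_nonneg a) (norm_nonneg b)]

theorem sq_norm_smul_sub_le {E : Type*} [NormedAddCommGroup E] [InnerProductSpace ℝ E]
    (b y : E) {μ : ℝ} (hμ : 0 < μ) :
    (‖μ • y‖ ^ 2 - ‖b + μ • y‖ ^ 2) / (2 * μ) ≤ μ * ‖y‖ ^ 2 / 2 := by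
  rw [div_le_iff₀ (by positivity), norm_add_smul_sq, norm_smul, Real.norm_eq_abs,
    abs_of_pos hμ]
  have hb := neg_le_of_abs_le (abs_real_inner_le_norm b y)
  nlinarith [sq_nonneg (‖b‖ - μ * ‖y‖)]

theorem limsup_coe_le_of_eventually_le_add {α : Type*} {l : Filter α} [l.NeBot]
    {s e : α → ℝ} {t : ℝ} (h : ∀ᶠ k in l, s k ≤ t + e k) (he : Tendsto e l (𝓝 0)) :
    limsup (fun k => (s k : EReal)) l ≤ t := by
  have hlim : Tendsto (fun k => ((t + e k : ℝ) : EReal)) l (𝓝 (t : EReal)) :=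
    EReal.tendsto_coe.2 (by simpa using tendsto_const_nhds.add he)
  exact (limsup_le_limsup (h.mono fun k hk => EReal.coe_le_coe_iff.2 hk)).trans
    hlim.limsup_eq.le

namespace Paper.ALMSeq

variable {n m : ℕ} {f : Euc n → ℝ} {c : Euc n → Euc m} {g : Euc m → EReal}
  (A : ALMSeq n m f c g)

theorem μ_pos (k : ℕ) : 0 < A.μ k := (A.hμthr k).1

theorem μ_antitone : Antitone A.μ := by
  refine antitone_nat_of_succ_le fun k => ?_
  rw [A.hμupd k]
  split_ifs
  · exact le_rfl
  · exact mul_le_of_le_one_left (A.μ_pos k).le A.hκ.2.le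

theorem tendsto_norm_sub_or_tendsto_μ :
    Tendsto (fun k => ‖c (A.x k) - A.z k‖) atTop (𝓝 0) ∨ Tendsto A.μ atTop (𝓝 0) := by
  by_cases hfreq : ∃ᶠ k in atTop, A.μ (k + 1) ≠ A.μ k
  · refine .inr <| tendsto_zero_of_antitone_of_frequently_le_mul A.hκ.2
      (fun k => (A.μ_pos k).le) A.μ_antitone (hfreq.mono fun k hk => ?_)
    rw [A.hμupd k] at hk ⊢
    split_ifs at hk ⊢
    · exact absurd rfl hk
    · exact le_rfl
  · left
    set V := fun k => ‖c (A.x k) - A.z k‖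
    obtain ⟨N, hN⟩ := eventually_atTop.1 (not_frequently.1 hfreq)
    -- once `μ` stops changing, every step satisfies the sufficient-decrease test
    have hdec : ∀ k, V (k + 1 + N) ≤ A.θ * V (k + N) := by
      intro k
      have hupd := A.hμupd (k + N + 1)
      rw [not_not.1 (hN _ (by omega))] at hupd
      by_cases hcond : k + N + 1 = 0 ∨ V (k + N + 1) ≤ A.θ * V (k + N + 1 - 1)
      · simpa [Nat.add_right_comm] using hcond.resolve_left (by omega)
      · rw [if_neg hcond] at hupd
        nlinarith [A.μ_pos (k + N + 1), A.hκ.2]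
    have hV0 : ∀ k, 0 ≤ V (k + N) := fun k => norm_nonneg _
    refine (tendsto_add_atTop_iff_nat N).1 <| tendsto_zero_of_antitone_of_frequently_le_mul
      A.hθ.2 hV0 (antitone_nat_of_succ_le fun k => ?_) (Eventually.of_forall hdec).frequently
    nlinarith [hdec k, hV0 k, A.hθ.2]

theorem tendsto_μ_smul_yhat (hμ : Tendsto A.μ atTop (𝓝 0)) :
    Tendsto (fun k => A.μ k • A.yhat k) atTop (𝓝 0) := by
  obtain ⟨C, hC⟩ := A.hYbdd.exists_norm_le
  exact hμ.zero_smul_isBoundedUnder_le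
    (isBoundedUnder_of ⟨C, fun k => hC _ (A.hyhatY k)⟩)

theorem z_mem_edom (hg : ProperFn g) (k : ℕ) : A.z k ∈ edom g := by
  obtain ⟨z₀, hz₀⟩ := hg.2
  have hpen : (0 : EReal) ≤
      ((‖A.z k - (c (A.x k) + A.μ k • A.yhat k)‖ ^ 2 / (2 * A.μ k) : ℝ) : EReal) :=
    EReal.coe_nonneg.2 (by have := A.μ_pos k; positivity)
  exact ((le_add_of_nonneg_right hpen).trans (A.hprox k z₀)).trans_lt
    (EReal.add_lt_top hz₀.ne (EReal.coe_ne_top _))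

def IsApproxGlobalMin : Prop :=
  ∀ k, ∀ x : Euc n, ALfun f c g (A.μ k) (A.x k) (A.yhat k) ≤
    ALfun f c g (A.μ k) x (A.yhat k) + (A.ε k : EReal)

theorem moreau_eq (k : ℕ) :
    moreau g (A.μ k) (c (A.x k) + A.μ k • A.yhat k) =
      g (A.z k) + ((‖A.z k - (c (A.x k) + A.μ k • A.yhat k)‖ ^ 2 / (2 * A.μ k) : ℝ) : EReal) :=
  le_antisymm (iInf_le _ _) (le_iInf (A.hprox k))

theorem value_add_penalty_le (hg : ProperFn g) (hglobal : A.IsApproxGlobalMin) (k : ℕ)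
    {x : Euc n} {z : Euc m} (hz : z ∈ edom g) :
    f (A.x k) + (g (A.z k)).toReal + ‖c (A.x k) - A.z k + A.μ k • A.yhat k‖ ^ 2 / (2 * A.μ k) ≤
      f x + (g z).toReal + ‖c x - z + A.μ k • A.yhat k‖ ^ 2 / (2 * A.μ k) + A.ε k := by
  have hnorm (w z' : Euc m) :
      ‖z' - (w + A.μ k • A.yhat k)‖ = ‖w - z' + A.μ k • A.yhat k‖ := by
    rw [← norm_neg]
    congr 1
    abel
  have hmor : moreau g (A.μ k) (c x + A.μ k • A.yhat k) ≤
      g z + ((‖z - (c x + A.μ k • A.yhat k)‖ ^ 2 / (2 * A.μ k) : ℝ) : EReal) :=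
    iInf_le _ _
  have h := hglobal k x
  rw [ALfun, ALfun, A.moreau_eq k] at h
  replace h := h.trans (add_le_add_left (EReal.sub_le_sub (add_le_add_right hmor _) le_rfl) _)
  rw [← EReal.coe_toReal (A.z_mem_edom hg k).ne (hg.1 _), ← EReal.coe_toReal hz.ne (hg.1 z),
    hnorm, hnorm] at h
  have h' : f (A.x k) + ((g (A.z k)).toReal +
        ‖c (A.x k) - A.z k + A.μ k • A.yhat k‖ ^ 2 / (2 * A.μ k)) - A.μ k / 2 * ‖A.yhat k‖ ^ 2 ≤
      f x + ((g z).toReal + ‖c x - z + A.μ k • A.yhat k‖ ^ 2 / (2 * A.μ k)) -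
        A.μ k / 2 * ‖A.yhat k‖ ^ 2 + A.ε k := by
    exact_mod_cast h
  linarith

theorem one_sub_mul_sq_norm_le (hg : ProperFn g) (hglobal : A.IsApproxGlobalMin) {μ' b : ℝ}
    (hμ' : 0 < μ') (hb : ∀ z, (b : EReal) ≤ g z + ((‖z‖ ^ 2 / (2 * μ') : ℝ) : EReal)) (k : ℕ)
    {x : Euc n} {z : Euc m} (hz : z ∈ edom g) :
    (1 - 2 * A.μ k / μ') * ‖c (A.x k) - A.z k + A.μ k • A.yhat k‖ ^ 2 ≤
      2 * A.μ k * (f x + (g z).toReal + A.ε k - f (A.x k) - b) +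
        2 * A.μ k / μ' * ‖c (A.x k) + A.μ k • A.yhat k‖ ^ 2 +
          ‖c x - z + A.μ k • A.yhat k‖ ^ 2 := by
  have hopt := A.value_add_penalty_le hg hglobal k (x := x) hz
  set r := c (A.x k) - A.z k + A.μ k • A.yhat k
  set w := c (A.x k) + A.μ k • A.yhat k
  set q := c x - z + A.μ k • A.yhat k
  have hμ := A.μ_pos k
  have hgz : b - ‖A.z k‖ ^ 2 / (2 * μ') ≤ (g (A.z k)).toReal := by
    have h := hb (A.z k)
    rw [← EReal.coe_toReal (A.z_mem_edom hg k).ne (hg.1 _), ← EReal.coe_add,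
      EReal.coe_le_coe_iff] at h
    linarith
  have hzk : ‖A.z k‖ ≤ ‖w‖ + ‖r‖ := by
    rw [show A.z k = w - r by simp only [w, r]; abel]
    exact norm_sub_le _ _
  have hzk_sq : ‖A.z k‖ ^ 2 ≤ 2 * ‖w‖ ^ 2 + 2 * ‖r‖ ^ 2 := by
    nlinarith [norm_nonneg (A.z k), sq_nonneg (‖w‖ - ‖r‖)]
  have hopt' : f (A.x k) + (b - ‖A.z k‖ ^ 2 / (2 * μ')) + ‖r‖ ^ 2 / (2 * A.μ k) ≤
      f x + (g z).toReal + ‖q‖ ^ 2 / (2 * A.μ k) + A.ε k := by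
    linarith
  have hscaled := mul_le_mul_of_nonneg_left hopt' (by positivity : 0 ≤ 2 * A.μ k)
  have hr : 2 * A.μ k * (‖r‖ ^ 2 / (2 * A.μ k)) = ‖r‖ ^ 2 := by field_simp
  have hq : 2 * A.μ k * (‖q‖ ^ 2 / (2 * A.μ k)) = ‖q‖ ^ 2 := by field_simp
  have hzk_scaled := mul_le_mul_of_nonneg_left hzk_sq (by positivity : 0 ≤ A.μ k / μ')
  linear_combination hscaled + hzk_scaled - hr + hq

variable {xbar : Euc n} {K : ℕ → ℕ}

theorem infDist_eq_zero_of_tendsto_norm_sub (hc : Continuous c) (hg : ProperFn g)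
    (hK : StrictMono K) (hacc : Tendsto (fun k => A.x (K k)) atTop (𝓝 xbar))
    (hV : Tendsto (fun k => ‖c (A.x k) - A.z k‖) atTop (𝓝 0)) :
    Metric.infDist (c xbar) (edom g) = 0 := by
  have hlim : Tendsto (fun j => Metric.infDist (c (A.x (K j))) (edom g)) atTop
      (𝓝 (Metric.infDist (c xbar) (edom g))) :=
    ((Metric.continuous_infDist_pt _).tendsto _).comp ((hc.tendsto xbar).comp hacc)
  refine le_antisymm (le_of_tendsto_of_tendsto' hlim (hV.comp hK.tendsto_atTop) fun j => ?_)
    Metric.infDist_nonneg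
  rw [Function.comp_apply, ← dist_eq_norm]
  exact Metric.infDist_le_dist_of_mem (A.z_mem_edom hg _)

theorem infDist_le_of_tendsto_μ (hf : Continuous f) (hc : Continuous c) (hg : ProperFn g)
    (hglobal : A.IsApproxGlobalMin) (hε0 : Tendsto A.ε atTop (𝓝 0)) (hμ : Tendsto A.μ atTop (𝓝 0)) (hK : StrictMono K)
    (hacc : Tendsto (fun k => A.x (K k)) atTop (𝓝 xbar)) (x : Euc n) :
    Metric.infDist (c xbar) (edom g) ≤ Metric.infDist (c x) (edom g) := by
  obtain ⟨μ', hμ'gt, b, hb⟩ := (A.hμthr 0).2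
  have hμ' : 0 < μ' := (A.μ_pos 0).trans hμ'gt
  have hKt := hK.tendsto_atTop
  have hμK := hμ.comp hKt
  have hsK := (A.tendsto_μ_smul_yhat hμ).comp hKt
  have hw : Tendsto (fun j => c (A.x (K j)) + A.μ (K j) • A.yhat (K j)) atTop (𝓝 (c xbar)) := by
    simpa using ((hc.tendsto xbar).comp hacc).add hsK
  obtain ⟨z₀, hz₀⟩ := hg.2
  rw [Metric.le_infDist ⟨z₀, hz₀⟩]
  intro z hz
  rw [dist_eq_norm]
  refine (pow_le_pow_iff_left₀ Metric.infDist_nonneg (norm_nonneg _) two_ne_zero).1 ?_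
  have hcoef : Tendsto (fun j => 1 - 2 * A.μ (K j) / μ') atTop (𝓝 1) := by
    simpa using tendsto_const_nhds.sub ((hμK.const_mul 2).div_const μ')
  have hlhs := hcoef.mul ((((Metric.continuous_infDist_pt (edom g)).tendsto _).comp hw).pow 2)
  rw [one_mul] at hlhs
  have hrhs : Tendsto (fun j =>
      2 * A.μ (K j) * (f x + (g z).toReal + A.ε (K j) - f (A.x (K j)) - b) +
        2 * A.μ (K j) / μ' * ‖c (A.x (K j)) + A.μ (K j) • A.yhat (K j)‖ ^ 2 +
          ‖c x - z + A.μ (K j) • A.yhat (K j)‖ ^ 2) atTop (𝓝 (‖c x - z‖ ^ 2)) := by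
    have hfK := (hf.tendsto xbar).comp hacc
    have hεK := hε0.comp hKt
    simpa using (((hμK.const_mul 2).mul ((tendsto_const_nhds.add hεK).sub hfK |>.sub
      tendsto_const_nhds)).add (((hμK.const_mul 2).div_const μ').mul (hw.norm.pow 2))).add
      ((tendsto_const_nhds.add hsK).norm.pow 2)
  refine le_of_tendsto_of_tendsto hlhs hrhs ?_
  filter_upwards [hcoef.eventually (lt_mem_nhds one_pos)] with j hj
  have hinf : Metric.infDist (c (A.x (K j)) + A.μ (K j) • A.yhat (K j)) (edom g) ≤
      ‖c (A.x (K j)) - A.z (K j) + A.μ (K j) • A.yhat (K j)‖ := by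
    refine (Metric.infDist_le_dist_of_mem (A.z_mem_edom hg (K j))).trans_eq ?_
    rw [dist_eq_norm]
    congr 1
    abel
  calc _ ≤ (1 - 2 * A.μ (K j) / μ') * ‖c (A.x (K j)) - A.z (K j) + A.μ (K j) • A.yhat (K j)‖ ^ 2 :=
        mul_le_mul_of_nonneg_left (pow_le_pow_left₀ Metric.infDist_nonneg hinf 2) hj.le
    _ ≤ _ := A.one_sub_mul_sq_norm_le hg hglobal hμ' hb (K j) hz

theorem infDist_le_infDist (hf : Continuous f) (hc : Continuous c) (hg : ProperFn g)
    (hglobal : A.IsApproxGlobalMin) (hε0 : Tendsto A.ε atTop (𝓝 0)) (hK : StrictMono K)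
    (hacc : Tendsto (fun k => A.x (K k)) atTop (𝓝 xbar)) (x : Euc n) :
    Metric.infDist (c xbar) (edom g) ≤ Metric.infDist (c x) (edom g) := by
  rcases A.tendsto_norm_sub_or_tendsto_μ with hV | hμ
  · rw [A.infDist_eq_zero_of_tendsto_norm_sub hc hg hK hacc hV]
    exact Metric.infDist_nonneg
  · exact A.infDist_le_of_tendsto_μ hf hc hg hglobal hε0 hμ hK hacc x

theorem eventually_yhat_eq_zero (hsafe : ∀ k, A.y k ∉ A.Y → A.yhat (k + 1) = 0)
    (hμ : Tendsto A.μ atTop (𝓝 0)) {d : ℝ} (hd : 0 < d)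
    (hdV : ∀ k, d ≤ ‖c (A.x k) - A.z k‖) : ∀ᶠ k in atTop, A.yhat k = 0 := by
  obtain ⟨C, hC⟩ := A.hYbdd.exists_norm_le
  have hsmall : ∀ᶠ k in atTop, A.μ k * (2 * C + 1) < d := by
    have hlim := hμ.mul_const (2 * C + 1)
    rw [zero_mul] at hlim
    exact hlim.eventually (gt_mem_nhds hd)
  obtain ⟨N, hN⟩ := eventually_atTop.1 hsmall
  refine eventually_atTop.2 ⟨N + 1, fun k hk => ?_⟩
  obtain ⟨j, rfl⟩ : ∃ j, k = j + 1 := ⟨k - 1, by omega⟩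
  refine hsafe j fun hyY => ?_
  have hμj := A.μ_pos j
  -- `y^j = ŷ^j + μ_j⁻¹ (c(x^j) - z^j)` has norm at least `d / μ_j - C`, too large to lie in `Y`
  have hlow : (A.μ j)⁻¹ * ‖c (A.x j) - A.z j‖ ≤ ‖A.y j‖ + ‖A.yhat j‖ := by
    rw [← abs_of_pos (inv_pos.2 hμj), ← Real.norm_eq_abs, ← norm_smul, A.hy j]
    simpa using norm_sub_le (A.yhat j + (A.μ j)⁻¹ • (c (A.x j) - A.z j)) (A.yhat j)
  rw [inv_mul_le_iff₀ hμj] at hlow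
  nlinarith [hN j (by omega), hdV j, hC _ hyY, hC _ (A.hyhatY j)]

theorem exists_penalty_gap_le (hsafe : ∀ k, A.y k ∉ A.Y → A.yhat (k + 1) = 0) {d : ℝ}
    (hd0 : 0 ≤ d) (hdV : ∀ k, d ≤ ‖c (A.x k) - A.z k‖) {a : Euc m} (ha : ‖a‖ = d) :
    ∃ e : ℕ → ℝ, Tendsto e atTop (𝓝 0) ∧ ∀ᶠ k in atTop,
      (‖a + A.μ k • A.yhat k‖ ^ 2 - ‖c (A.x k) - A.z k + A.μ k • A.yhat k‖ ^ 2) /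
        (2 * A.μ k) ≤ e k := by
  obtain ⟨C, hC⟩ := A.hYbdd.exists_norm_le
  have hyhat (k : ℕ) : ‖A.yhat k‖ ≤ C := hC _ (A.hyhatY k)
  rcases hd0.eq_or_lt with rfl | hd
  · obtain rfl : a = 0 := norm_eq_zero.1 ha
    rcases A.tendsto_norm_sub_or_tendsto_μ with hV | hμ
    · refine ⟨fun k => ‖c (A.x k) - A.z k‖ * C, by simpa using hV.mul_const C,
        .of_forall fun k => ?_⟩
      refine (sq_norm_add_smul_sub_le _ (A.μ_pos k) (by simp)).trans ?_
      rw [norm_zero, zero_add]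
      exact mul_le_mul_of_nonneg_left (hyhat k) (norm_nonneg _)
    · refine ⟨fun k => A.μ k * C ^ 2 / 2, by simpa using (hμ.mul_const (C ^ 2)).div_const 2,
        .of_forall fun k => ?_⟩
      rw [zero_add]
      refine (sq_norm_smul_sub_le _ _ (A.μ_pos k)).trans ?_
      have hμk := A.μ_pos k
      have hsq := pow_le_pow_left₀ (norm_nonneg _) (hyhat k) 2
      dsimp only
      gcongr
  · have hμ := A.tendsto_norm_sub_or_tendsto_μ.resolve_left
      fun hV => hd.not_ge (ge_of_tendsto' hV hdV)
    refine ⟨0, tendsto_const_nhds, ?_⟩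
    filter_upwards [A.eventually_yhat_eq_zero hsafe hμ hd hdV] with k hk
    rw [hk, smul_zero, add_zero, add_zero]
    refine div_nonpos_of_nonpos_of_nonneg (sub_nonpos.2 ?_) (by linarith [A.μ_pos k])
    exact pow_le_pow_left₀ (norm_nonneg _) (ha.trans_le (hdV k)) 2

theorem limsup_value_le (hg : ProperFn g) (hglobal : A.IsApproxGlobalMin)
    (hε0 : Tendsto A.ε atTop (𝓝 0)) (hsafe : ∀ k, A.y k ∉ A.Y → A.yhat (k + 1) = 0) {d : ℝ}
    (hd0 : 0 ≤ d) (hdV : ∀ k, d ≤ ‖c (A.x k) - A.z k‖) {x : Euc n} {z : Euc m}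
    (hz : z ∈ edom g) (hxz : ‖c x - z‖ = d) :
    limsup (fun k => (f (A.x k) : EReal) + g (A.z k)) atTop ≤ (f x : EReal) + g z := by
  obtain ⟨e, he, hgap⟩ := A.exists_penalty_gap_le hsafe hd0 hdV hxz
  have hval : (fun k => (f (A.x k) : EReal) + g (A.z k)) =
      fun k => ((f (A.x k) + (g (A.z k)).toReal : ℝ) : EReal) := by
    funext k
    rw [EReal.coe_add, EReal.coe_toReal (A.z_mem_edom hg k).ne (hg.1 _)]
  rw [hval, ← EReal.coe_toReal hz.ne (hg.1 z), ← EReal.coe_add]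
  refine limsup_coe_le_of_eventually_le_add (e := fun k => A.ε k + e k) ?_
    (by simpa using hε0.add he)
  filter_upwards [hgap] with k hk
  have hopt := A.value_add_penalty_le hg hglobal k (x := x) hz
  rw [sub_div] at hk
  linarith

end Paper.ALMSeq

namespace Paper

theorem statement13_general {n m : ℕ}
    (f : Euc n → ℝ) (c : Euc n → Euc m) (g : Euc m → EReal)
    (hf : ContDiff ℝ 2 f) (hc : ContDiff ℝ 2 c)
    (hgp : ProperFn g)
    (A : ALMSeq n m f c g)
    (hε0 : Tendsto A.ε atTop (𝓝 0))
    (hglobal : ∀ k, ∀ x : Euc n,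
      ALfun f c g (A.μ k) (A.x k) (A.yhat k) ≤
        ALfun f c g (A.μ k) x (A.yhat k) + (A.ε k : EReal))
    (hsafe : ∀ k, A.y k ∉ A.Y → A.yhat (k + 1) = 0)
    (xbar : Euc n) (K : ℕ → ℕ) (hK : StrictMono K)
    (hacc : Tendsto (fun k => A.x (K k)) atTop (𝓝 xbar)) :
    (∀ x : Euc n, Metric.infDist (c xbar) (edom g) ≤ Metric.infDist (c x) (edom g)) ∧
      (∀ (x : Euc n) (z : Euc m), z ∈ edom g →
        ‖c x - z‖ = Metric.infDist (c xbar) (edom g) →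
        limsup (fun k => (f (A.x k) : EReal) + g (A.z k)) atTop ≤ (f x : EReal) + g z) := by
  have hmin := A.infDist_le_infDist hf.continuous hc.continuous hgp hglobal hε0 hK hacc
  have hgap (k : ℕ) : Metric.infDist (c xbar) (edom g) ≤ ‖c (A.x k) - A.z k‖ :=
    (hmin _).trans ((Metric.infDist_le_dist_of_mem (A.z_mem_edom hgp k)).trans_eq
      (dist_eq_norm _ _))
  exact ⟨hmin, fun x z hz hxz =>
    A.limsup_value_le hgp hglobal hε0 hsafe Metric.infDist_nonneg hgap hz hxz⟩

theorem statement13 {n m : ℕ}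
    (f : Euc n → ℝ) (c : Euc n → Euc m) (g : Euc m → EReal)
    (hf : ContDiff ℝ 2 f) (hc : ContDiff ℝ 2 c)
    (hgp : ProperFn g) (hglsc : LowerSemicontinuous g) (hgpb : ProxBounded g)
    (hphi : ∃ r : ℝ, (⨅ x : Euc n, ((f x : EReal) + g (c x))) = (r : EReal))
    (A : ALMSeq n m f c g)
    (hε0 : Tendsto A.ε atTop (𝓝 0))
    (hglobal : ∀ k, ∀ x : Euc n,
      ALfun f c g (A.μ k) (A.x k) (A.yhat k) ≤
        ALfun f c g (A.μ k) x (A.yhat k) + (A.ε k : EReal))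
    (hdomcl : IsClosed (edom g))
    (hsafe : ∀ k, A.y k ∉ A.Y → A.yhat (k + 1) = 0)
    (xbar : Euc n) (K : ℕ → ℕ) (hK : StrictMono K)
    (hacc : Tendsto (fun k => A.x (K k)) atTop (𝓝 xbar)) :
    (∀ x : Euc n, Metric.infDist (c xbar) (edom g) ≤ Metric.infDist (c x) (edom g)) ∧
      (∀ (x : Euc n) (z : Euc m), z ∈ edom g →
        ‖c x - z‖ = Metric.infDist (c xbar) (edom g) →
        limsup (fun k => (f (A.x k) : EReal) + g (A.z k)) atTop ≤ (f x : EReal) + g z) :=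
  statement13_general f c g hf hc hgp A hε0 hglobal hsafe xbar K hK hacc

end Paper
end
end

section
/- Let x̄ ∈ ℝ^n be a strict local minimizer of problem (P) and let Y ⊆ ℝ^m be nonempty and bounded. Then there exists a radius r > 0 such that for every ŷ ∈ Y and every μ ∈ (0, μ_g), the function L_μ(·, ŷ) attains its minimum over the closed ball B_r(x̄) at some point x(μ, ŷ) ∈ B_r(x̄), and these minimizers converge to x̄ uniformly on Y as μ ↓ 0: for every δ > 0 there exists μ̄ > 0 such that every minimizer of L_μ(·, ŷ) over B_r(x̄) lies within distance δ of x̄, for all μ ∈ (0, μ̄) and all ŷ ∈ Y. In particular, for μ small enough, x(μ, ŷ) is a local minimizer of L_μ(·, ŷ). -/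
open Filter Topology Bornology

noncomputable section

namespace EReal

theorem coe_add_iInf {ι : Sort*} (a : ℝ) (h : ι → EReal) :
    (a : EReal) + ⨅ i, h i = ⨅ i, ((a : EReal) + h i) :=
  Monotone.map_iInf_of_continuousAt (f := fun x => (a : EReal) + x)
    ((continuousAt_add (Or.inl (coe_ne_top a)) (Or.inl (coe_ne_bot a))).comp
      (Continuous.prodMk_right _).continuousAt) (fun _ _ h => add_le_add_right h _) (coe_add_top a)

theorem exists_eq_coe_of_le_add_of_add_le {e : EReal} {a b r s : ℝ} (h₁ : (a : EReal) ≤ e + r)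
    (h₂ : e + s ≤ b) : ∃ x : ℝ, e = x := by
  induction e using EReal.rec with
  | bot => simp at h₁
  | coe x => exact ⟨x, rfl⟩
  | top => simp at h₂

end EReal

theorem LowerSemicontinuous.add_coe {X : Type*} [TopologicalSpace X] {F : X → EReal} {h : X → ℝ}
    (hF : LowerSemicontinuous F) (hh : Continuous h) :
    LowerSemicontinuous fun x => F x + h x :=
  hF.add' (continuous_coe_real_ereal.comp hh).lowerSemicontinuous fun _ =>
    EReal.continuousAt_add (Or.inr (EReal.coe_ne_bot _)) (Or.inr (EReal.coe_ne_top _))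

theorem LowerSemicontinuous.exists_lt_of_mem_cthickening {X : Type*} [PseudoMetricSpace X]
    {Ψ : X → EReal} (hΨ : LowerSemicontinuous Ψ) {S : Set X} (hS : IsCompact S) {a : ℝ}
    (ha : ∀ p ∈ S, (a : EReal) < Ψ p) :
    ∃ γ : ℝ, a < γ ∧ ∃ η > 0, ∀ q ∈ Metric.cthickening η S, (γ : EReal) < Ψ q := by
  rcases S.eq_empty_or_nonempty with rfl | hne
  · exact ⟨a + 1, by linarith, 1, one_pos, by simp⟩
  obtain ⟨p₀, hp₀, hmin⟩ := (hΨ.lowerSemicontinuousOn S).exists_isMinOn hne hS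
  obtain ⟨γ, haγ, hγ⟩ := EReal.lt_iff_exists_real_btwn.1 (ha p₀ hp₀)
  obtain ⟨η, hη, hsub⟩ := hS.exists_cthickening_subset_open (hΨ.isOpen_preimage γ)
    fun p hp => hγ.trans_le (hmin hp)
  exact ⟨γ, EReal.coe_lt_coe_iff.1 haγ, η, hη, hsub⟩

theorem LowerSemicontinuous.exists_isMinOn_iInf {X Z : Type*} [TopologicalSpace X]
    [TopologicalSpace Z] {Φ : X × Z → EReal} (hΦ : LowerSemicontinuous Φ) {K : Set X}
    (hK : IsCompact K) {B : Set Z} (hB : IsCompact B) {p : X × Z} (hp : p ∈ K ×ˢ B)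
    (hout : ∀ x ∈ K, ∀ z ∉ B, Φ p ≤ Φ (x, z)) :
    ∃ x₀ ∈ K, IsMinOn (fun x => ⨅ z, Φ (x, z)) K x₀ := by
  obtain ⟨p₀, hp₀, hmin⟩ := (hΦ.lowerSemicontinuousOn _).exists_isMinOn ⟨p, hp⟩ (hK.prod hB)
  refine ⟨p₀.1, hp₀.1, isMinOn_iff.2 fun x hx => (iInf_le _ p₀.2).trans (le_iInf fun z => ?_)⟩
  by_cases hz : z ∈ B
  · exact hmin (Set.mk_mem_prod hx hz)
  · exact (hmin hp).trans (hout x hx z hz)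

theorem mul_sq_norm_sub_le_of_proxBound {E : Type*} [SeminormedAddCommGroup E] {z w : E}
    {G b B μ μ' t : ℝ} (hμ : 0 < μ) (hμ' : 0 < μ') (ht : 0 < t)
    (hb : b ≤ G + ‖z‖ ^ 2 / (2 * μ')) (hB : G + ‖z - w‖ ^ 2 / (2 * μ) ≤ B) :
    (μ' - (1 + t) * μ) * ‖z - w‖ ^ 2 ≤ μ * (2 * μ' * (B - b) + (1 + t⁻¹) * ‖w‖ ^ 2) := by
  have hyoung : 2 * ‖z - w‖ * ‖w‖ ≤ t * ‖z - w‖ ^ 2 + t⁻¹ * ‖w‖ ^ 2 := by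
    have h := div_nonneg (sq_nonneg (t * ‖z - w‖ - ‖w‖)) ht.le
    have hexp : (t * ‖z - w‖ - ‖w‖) ^ 2 / t =
        t * ‖z - w‖ ^ 2 + t⁻¹ * ‖w‖ ^ 2 - 2 * ‖z - w‖ * ‖w‖ := by
      field_simp
      ring
    linarith
  have hz : ‖z‖ ^ 2 ≤ (1 + t) * ‖z - w‖ ^ 2 + (1 + t⁻¹) * ‖w‖ ^ 2 := by
    have := norm_le_norm_add_norm_sub' z w
    nlinarith [norm_nonneg z]
  have h1 : μ' * ‖z - w‖ ^ 2 ≤ 2 * μ * μ' * (B - b) + μ * ‖z‖ ^ 2 := by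
    have h := mul_le_mul_of_nonneg_left (show ‖z - w‖ ^ 2 / (2 * μ) ≤ B - b + ‖z‖ ^ 2 / (2 * μ')
      by linarith) (by positivity : (0 : ℝ) ≤ 2 * μ * μ')
    field_simp at h
    linarith
  nlinarith

theorem exists_norm_le_of_proxBound {E : Type*} [SeminormedAddCommGroup E] {b μ μ' : ℝ}
    (hμ : 0 < μ) (hμμ' : μ < μ') (B W : ℝ) :
    ∃ R, ∀ (G : ℝ) (z w : E), ‖w‖ ≤ W → b ≤ G + ‖z‖ ^ 2 / (2 * μ') →
      G + ‖z - w‖ ^ 2 / (2 * μ) ≤ B → ‖z‖ ≤ R := by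
  set t := (μ' - μ) / (2 * μ)
  have ht : 0 < t := div_pos (by linarith) (by linarith)
  have hcoef : μ' - (1 + t) * μ = (μ' - μ) / 2 := by
    simp only [t]
    field_simp
    ring
  set C := μ * (2 * μ' * (B - b) + (1 + t⁻¹) * W ^ 2)
  refine ⟨√(2 * C / (μ' - μ)) + W, fun G z w hw hb hB => ?_⟩
  have h := mul_sq_norm_sub_le_of_proxBound hμ (hμ.trans hμμ') ht hb hB
  have hC : μ * (2 * μ' * (B - b) + (1 + t⁻¹) * ‖w‖ ^ 2) ≤ C := by
    simp only [C]
    gcongr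
  have hsq : ‖z - w‖ ^ 2 ≤ 2 * C / (μ' - μ) := by
    rw [le_div_iff₀ (by linarith)]
    linarith [hcoef ▸ h]
  calc ‖z‖ ≤ ‖z - w‖ + ‖w‖ := norm_le_norm_sub_add z w
    _ ≤ _ := add_le_add (by simpa using Real.abs_le_sqrt hsq) hw

theorem exists_gap_near_graph {X Z : Type*} [PseudoMetricSpace X] [PseudoMetricSpace Z]
    {f : X → ℝ} {c : X → Z} {g : Z → EReal} (hf : Continuous f) (hc : Continuous c)
    (hg : LowerSemicontinuous g) {A : Set X} (hA : IsCompact A) {a : ℝ}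
    (ha : ∀ x ∈ A, (a : EReal) < g (c x) + f x) :
    ∃ γ : ℝ, a < γ ∧ ∃ η > 0, ∀ x ∈ A, ∀ z, dist z (c x) ≤ η → (γ : EReal) < g z + f x := by
  obtain ⟨γ, haγ, η, hη, hγ⟩ := ((hg.comp continuous_snd).add_coe (hf.comp continuous_fst)
    ).exists_lt_of_mem_cthickening (hA.image (continuous_id.prodMk hc)) (a := a)
    (by rintro _ ⟨x, hx, rfl⟩; exact ha x hx)
  refine ⟨γ, haγ, η, hη, fun x hx z hz => hγ (x, z) ?_⟩
  refine Metric.mem_cthickening_of_dist_le _ (x, c x) _ _ (Set.mem_image_of_mem _ hx) ?_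
  simpa [Prod.dist_eq] using hz

theorem eventually_mul_lt (k : ℝ) {ε : ℝ} (hε : 0 < ε) : ∀ᶠ μ in 𝓝 (0 : ℝ), μ * k < ε := by
  have h : Tendsto (fun μ : ℝ => μ * k) (𝓝 0) (𝓝 0) := by
    simpa using (continuous_mul_const k).tendsto 0
  exact h.eventually (gt_mem_nhds hε)

namespace Paper

variable {n m : ℕ}

theorem ALfun_eq_iInf (f : Euc n → ℝ) (c : Euc n → Euc m) (g : Euc m → EReal) (μ : ℝ)
    (x : Euc n) (y : Euc m) :
    ALfun f c g μ x y =
      ⨅ z, g z + ((f x + ‖z - (c x + μ • y)‖ ^ 2 / (2 * μ) - μ / 2 * ‖y‖ ^ 2 : ℝ) : EReal) := by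
  rw [ALfun, moreau, EReal.coe_add_iInf, sub_eq_add_neg, ← EReal.coe_neg, add_comm,
    EReal.coe_add_iInf]
  refine iInf_congr fun z => ?_
  rw [sub_eq_add_neg (f x + _), EReal.coe_add, EReal.coe_add]
  abel

theorem ALfun_le {f : Euc n → ℝ} {c : Euc n → Euc m} {g : Euc m → EReal} {μ : ℝ} (hμ : 0 < μ)
    (x : Euc n) (y : Euc m) : ALfun f c g μ x y ≤ g (c x) + (f x : EReal) := by
  rw [ALfun_eq_iInf]
  refine (iInf_le _ (c x)).trans_eq ?_
  rw [sub_add_cancel_left, norm_neg, norm_smul, Real.norm_of_nonneg hμ.le]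
  congr 2
  field_simp
  ring

theorem exists_isMinOn_ALfun {f : Euc n → ℝ} {c : Euc n → Euc m} {g : Euc m → EReal}
    (hf : Continuous f) (hc : Continuous c) (hg : LowerSemicontinuous g)
    (hdom : (edom g).Nonempty) {μ : ℝ} (hμ : BelowThreshold g μ) (y : Euc m)
    {K : Set (Euc n)} (hK : IsCompact K) (hKne : K.Nonempty) :
    ∃ x₀ ∈ K, IsMinOn (fun x => ALfun f c g μ x y) K x₀ := by
  obtain ⟨hμ0, μ', hμμ', b, hb⟩ := hμ
  obtain ⟨x₁, hx₁⟩ := hKne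
  obtain ⟨z₁, hz₁⟩ := hdom
  set q : Euc n × Euc m → ℝ := fun p =>
    f p.1 + ‖p.2 - (c p.1 + μ • y)‖ ^ 2 / (2 * μ) - μ / 2 * ‖y‖ ^ 2
  have hq : Continuous q := by fun_prop
  obtain ⟨G₁, hG₁⟩ : ∃ G₁ : ℝ, g z₁ = G₁ :=
    ⟨(g z₁).toReal, (EReal.coe_toReal hz₁.ne fun h => by simpa [h] using hb z₁).symm⟩
  obtain ⟨Fmin, hFmin⟩ := (hK.image_of_continuousOn hf.continuousOn).bddBelow
  obtain ⟨W, hW⟩ := hK.exists_bound_of_continuousOn (f := fun x => c x + μ • y) (by fun_prop)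
  obtain ⟨R, hR⟩ := exists_norm_le_of_proxBound (E := Euc m) (b := b) hμ0 hμμ'
    (G₁ + q (x₁, z₁) - Fmin + μ / 2 * ‖y‖ ^ 2) W
  have hmin := ((hg.comp continuous_snd).add_coe hq).exists_isMinOn_iInf hK
    (isCompact_closedBall 0 (max R ‖z₁‖)) (p := (x₁, z₁)) ⟨hx₁, by simp⟩ fun x hx z hz => by
      by_contra! hlt
      simp only [Function.comp, hG₁, ← EReal.coe_add] at hlt
      obtain ⟨G, hG⟩ := EReal.exists_eq_coe_of_le_add_of_add_le (hb z) hlt.le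
      rw [hG, ← EReal.coe_add, EReal.coe_lt_coe_iff] at hlt
      have hbz := hb z
      rw [hG, ← EReal.coe_add, EReal.coe_le_coe_iff] at hbz
      have hFx := hFmin (Set.mem_image_of_mem f hx)
      refine hz (mem_closedBall_zero_iff.2 ((hR G z _ (hW x hx) hbz ?_).trans (le_max_left _ _)))
      simp only [q] at hlt ⊢
      linarith
  simpa only [ALfun_eq_iInf, Function.comp, q] using hmin

theorem exists_near_of_ALfun_lt {f : Euc n → ℝ} {c : Euc n → Euc m} {g : Euc m → EReal}
    {b₀ μ₀ μ a : ℝ} (hb₀ : ∀ z, (b₀ : EReal) ≤ g z + ((‖z‖ ^ 2 / (2 * μ₀) : ℝ) : EReal))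
    (hμ : 0 < μ) (hμμ₀ : 4 * μ ≤ μ₀) {x : Euc n} {y : Euc m} (h : ALfun f c g μ x y < a) :
    ∃ z : Euc m, ∃ G : ℝ, g z = G ∧ G + f x < a + μ / 2 * ‖y‖ ^ 2 ∧
      μ₀ * ‖z - (c x + μ • y)‖ ^ 2 ≤
        4 * μ * (μ₀ * (a + μ / 2 * ‖y‖ ^ 2 - f x - b₀) + ‖c x + μ • y‖ ^ 2) := by
  rw [ALfun_eq_iInf] at h
  obtain ⟨z, hz⟩ := iInf_lt_iff.1 h
  obtain ⟨G, hG⟩ := EReal.exists_eq_coe_of_le_add_of_add_le (hb₀ z) hz.le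
  have hbz := hb₀ z
  rw [hG, ← EReal.coe_add, EReal.coe_le_coe_iff] at hbz
  rw [hG, ← EReal.coe_add, EReal.coe_lt_coe_iff] at hz
  have hq : 0 ≤ ‖z - (c x + μ • y)‖ ^ 2 / (2 * μ) := by positivity
  have hloc := mul_sq_norm_sub_le_of_proxBound (t := 1) (w := c x + μ • y)
    (B := a + μ / 2 * ‖y‖ ^ 2 - f x) hμ (by linarith) one_pos hbz (by linarith)
  refine ⟨z, G, hG, by linarith, ?_⟩
  norm_num at hloc
  nlinarith [mul_nonneg (sub_nonneg.2 hμμ₀) (sq_nonneg ‖z - (c x + μ • y)‖)]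

theorem eventually_exists_near_of_ALfun_lt {f : Euc n → ℝ} {c : Euc n → Euc m}
    {g : Euc m → EReal} {b₀ μ₀ : ℝ}
    (hb₀ : ∀ z, (b₀ : EReal) ≤ g z + ((‖z‖ ^ 2 / (2 * μ₀) : ℝ) : EReal)) (hμ₀ : 0 < μ₀) (a F C M : ℝ) {ε η : ℝ} (hε : 0 < ε) (hη : 0 < η) :
    ∀ᶠ μ in 𝓝[>] 0, ∀ (x : Euc n) (y : Euc m), F ≤ f x → ‖c x‖ ≤ C → ‖y‖ ≤ M →
      ALfun f c g μ x y < a → ∃ z : Euc m, ∃ G : ℝ, g z = G ∧ G + f x < a + ε ∧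
        dist z (c x) ≤ η := by
  set W := C + η / 2
  set D := 4 * (μ₀ * (a + ε - F - b₀) + W ^ 2)
  have hsmall : ∀ᶠ μ in 𝓝 (0 : ℝ),
      μ * 4 < μ₀ ∧ μ * M < η / 2 ∧ μ * M ^ 2 < 2 * ε ∧ μ * D < μ₀ * (η / 2) ^ 2 :=
    (eventually_mul_lt 4 hμ₀).and <| (eventually_mul_lt M (by positivity)).and <|
      (eventually_mul_lt _ (by positivity)).and (eventually_mul_lt D (by positivity))
  filter_upwards [self_mem_nhdsWithin, nhdsWithin_le_nhds hsmall] with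
    μ (hμ : 0 < μ) ⟨hμ₀4, hμM, hμM2, hμD⟩ x y hFx hCx hy hval
  obtain ⟨z, G, hG, hGf, hzw⟩ := exists_near_of_ALfun_lt hb₀ hμ (by linarith) hval
  have hμy : μ * ‖y‖ ≤ μ * M := mul_le_mul_of_nonneg_left hy hμ.le
  have hμy2 : μ * ‖y‖ ^ 2 ≤ μ * M ^ 2 :=
    mul_le_mul_of_nonneg_left (pow_le_pow_left₀ (norm_nonneg _) hy 2) hμ.le
  have hμy' : ‖μ • y‖ = μ * ‖y‖ := by rw [norm_smul, Real.norm_of_nonneg hμ.le]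
  have hw : ‖c x + μ • y‖ ≤ W := by
    have := norm_add_le (c x) (μ • y)
    simp only [W]
    linarith
  have hzw' : ‖z - (c x + μ • y)‖ ≤ η / 2 := by
    have h1 : μ₀ * (a + μ / 2 * ‖y‖ ^ 2 - f x - b₀) ≤ μ₀ * (a + ε - F - b₀) :=
      mul_le_mul_of_nonneg_left (by linarith) hμ₀.le
    have h2 : ‖c x + μ • y‖ ^ 2 ≤ W ^ 2 := pow_le_pow_left₀ (norm_nonneg _) hw 2
    have h3 : μ₀ * ‖z - (c x + μ • y)‖ ^ 2 ≤ μ₀ * (η / 2) ^ 2 := by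
      have := mul_le_mul_of_nonneg_left (add_le_add h1 h2) (by positivity : (0 : ℝ) ≤ 4 * μ)
      simp only [D] at hμD
      linarith
    exact (pow_le_pow_iff_left₀ (norm_nonneg _) (by positivity) two_ne_zero).1
      (le_of_mul_le_mul_left h3 hμ₀)
  refine ⟨z, G, hG, by linarith, ?_⟩
  rw [dist_eq_norm]
  calc ‖z - c x‖ = ‖(z - (c x + μ • y)) + μ • y‖ := by congr 1; abel
    _ ≤ ‖z - (c x + μ • y)‖ + ‖μ • y‖ := norm_add_le _ _
    _ ≤ η := by linarith

theorem exists_gap_of_strictMin {f : Euc n → ℝ} {c : Euc n → Euc m} {g : Euc m → EReal}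
    (hf : Continuous f) (hc : Continuous c) (hg : LowerSemicontinuous g) {xbar : Euc n} {r δ : ℝ}
    (hδ : 0 < δ) (hstrict : ∀ x : Euc n, ‖x - xbar‖ ≤ r → c x ∈ edom g → x ≠ xbar →
      (f xbar : EReal) + g (c xbar) < (f x : EReal) + g (c x)) {G₀ : ℝ} (hG₀ : g (c xbar) = G₀) :
    ∃ γ : ℝ, G₀ + f xbar < γ ∧ ∃ η > 0, ∀ x ∈ Metric.closedBall xbar r, δ ≤ ‖x - xbar‖ →
      ∀ z, dist z (c x) ≤ η → (γ : EReal) < g z + f x := by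
  have hA : IsCompact (Metric.closedBall xbar r ∩ {x | δ ≤ ‖x - xbar‖}) :=
    (isCompact_closedBall _ _).inter_right (isClosed_le continuous_const (by fun_prop))
  obtain ⟨γ, hγ, η, hη, hgap⟩ := exists_gap_near_graph hf hc hg hA (a := G₀ + f xbar) <| by
    rintro x ⟨hxr, hxδ : δ ≤ ‖x - xbar‖⟩
    by_cases hx : c x ∈ edom g
    · have hne : x ≠ xbar := by
        rintro rfl
        simp only [sub_self, norm_zero] at hxδ
        linarith
      have h := hstrict x (mem_closedBall_iff_norm.1 hxr) hx hne
      rwa [hG₀, add_comm, add_comm (f x : EReal), ← EReal.coe_add] at h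
    · rw [edom, Set.mem_ofPred_eq, not_lt, top_le_iff] at hx
      rw [hx, EReal.top_add_coe]
      exact EReal.coe_lt_top _
  exact ⟨γ, hγ, η, hη, fun x hxr hxδ => hgap x ⟨hxr, hxδ⟩⟩

theorem eventually_norm_sub_le_of_isMinOn_ALfun {f : Euc n → ℝ} {c : Euc n → Euc m}
    {g : Euc m → EReal} (hf : Continuous f) (hc : Continuous c) (hg : LowerSemicontinuous g)
    (hgpb : ProxBounded g) {xbar : Euc n} {r : ℝ} (hdom : c xbar ∈ edom g)
    (hstrict : ∀ x : Euc n, ‖x - xbar‖ ≤ r → c x ∈ edom g → x ≠ xbar →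
      (f xbar : EReal) + g (c xbar) < (f x : EReal) + g (c x))
    {Y : Set (Euc m)} (hY : IsBounded Y) {δ : ℝ} (hδ : 0 < δ) :
    ∀ᶠ μ in 𝓝[>] 0, ∀ y ∈ Y, ∀ x₀ ∈ Metric.closedBall xbar r,
      IsMinOn (fun x => ALfun f c g μ x y) (Metric.closedBall xbar r) x₀ → ‖x₀ - xbar‖ ≤ δ := by
  obtain ⟨μ₀, hμ₀, b₀, hb₀⟩ := hgpb
  obtain ⟨M, hM⟩ := hY.exists_norm_le
  obtain ⟨G₀, hG₀⟩ : ∃ G₀ : ℝ, g (c xbar) = G₀ := ⟨(g (c xbar)).toReal,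
    (EReal.coe_toReal hdom.ne fun h => by simpa [h] using hb₀ (c xbar)).symm⟩
  obtain ⟨γ, hγ, η, hη, hgap⟩ := exists_gap_of_strictMin hf hc hg hδ hstrict hG₀
  obtain ⟨F, hF⟩ := ((isCompact_closedBall xbar r).image_of_continuousOn hf.continuousOn).bddBelow
  obtain ⟨C, hC⟩ := (isCompact_closedBall xbar r).exists_bound_of_continuousOn hc.continuousOn
  filter_upwards [self_mem_nhdsWithin, eventually_exists_near_of_ALfun_lt hb₀ hμ₀
    ((G₀ + f xbar + γ) / 2) F C M (by linarith : 0 < (γ - (G₀ + f xbar)) / 2) hη] with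
    μ (hμ : 0 < μ) hnear y hy x₀ hx₀ hmin
  by_contra! hfar
  have hval : ALfun f c g μ x₀ y < ((G₀ + f xbar + γ) / 2 : ℝ) := by
    refine (hmin (Metric.mem_closedBall_self (Metric.nonempty_closedBall.1 ⟨x₀, hx₀⟩))).trans_lt
      ((ALfun_le hμ xbar y).trans_lt ?_)
    rw [hG₀, ← EReal.coe_add, EReal.coe_lt_coe_iff]
    linarith
  obtain ⟨z, G, hG, hGf, hz⟩ :=
    hnear x₀ y (hF (Set.mem_image_of_mem f hx₀)) (hC x₀ hx₀) (hM y hy) hval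
  have hγz := hgap x₀ hx₀ hfar.le z hz
  rw [hG, ← EReal.coe_add, EReal.coe_lt_coe_iff] at hγz
  linarith

theorem statement16_general {n m : ℕ}
    (f : Euc n → ℝ) (c : Euc n → Euc m) (g : Euc m → EReal)
    (hf : ContDiff ℝ 2 f) (hc : ContDiff ℝ 2 c)
    (hglsc : LowerSemicontinuous g) (hgpb : ProxBounded g)
    (xbar : Euc n) (hmin : StrictLocalMin f c g xbar)
    (Y : Set (Euc m)) (hYbdd : IsBounded Y) :
    ∃ r : ℝ, 0 < r ∧
      (∀ yhat ∈ Y, ∀ μ : ℝ, BelowThreshold g μ →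
        ∃ x₀ : Euc n, ‖x₀ - xbar‖ ≤ r ∧
          ∀ x : Euc n, ‖x - xbar‖ ≤ r → ALfun f c g μ x₀ yhat ≤ ALfun f c g μ x yhat) ∧
      (∀ δ : ℝ, 0 < δ → ∃ μbar : ℝ, 0 < μbar ∧
        ∀ μ : ℝ, BelowThreshold g μ → μ < μbar → ∀ yhat ∈ Y, ∀ x₀ : Euc n,
          (‖x₀ - xbar‖ ≤ r ∧
            ∀ x : Euc n, ‖x - xbar‖ ≤ r → ALfun f c g μ x₀ yhat ≤ ALfun f c g μ x yhat) →
          ‖x₀ - xbar‖ ≤ δ) ∧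
      (∃ μbar : ℝ, 0 < μbar ∧
        ∀ μ : ℝ, BelowThreshold g μ → μ < μbar → ∀ yhat ∈ Y, ∀ x₀ : Euc n,
          (‖x₀ - xbar‖ ≤ r ∧
            ∀ x : Euc n, ‖x - xbar‖ ≤ r → ALfun f c g μ x₀ yhat ≤ ALfun f c g μ x yhat) →
          ∃ ρ : ℝ, 0 < ρ ∧ ∀ x : Euc n, ‖x - x₀‖ ≤ ρ →
            ALfun f c g μ x₀ yhat ≤ ALfun f c g μ x yhat) := by
  obtain ⟨hdom, r, hr, hstrict⟩ := hmin
  have hball {F : Euc n → EReal} {x₀ : Euc n} :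
      IsMinOn F (Metric.closedBall xbar r) x₀ ↔ ∀ x, ‖x - xbar‖ ≤ r → F x₀ ≤ F x := by
    simp [isMinOn_iff, dist_eq_norm]
  have hconv {δ : ℝ} (hδ : 0 < δ) := (nhdsGT_basis (0 : ℝ)).eventually_iff.1
    (eventually_norm_sub_le_of_isMinOn_ALfun hf.continuous hc.continuous hglsc hgpb hdom hstrict
      hYbdd hδ)
  refine ⟨r, hr, fun y _ μ hμ => ?_, fun δ hδ => ?_, ?_⟩
  · obtain ⟨x₀, hx₀, hmin⟩ := exists_isMinOn_ALfun hf.continuous hc.continuous hglsc ⟨_, hdom⟩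
      hμ y (isCompact_closedBall xbar r) ⟨xbar, Metric.mem_closedBall_self hr.le⟩
    exact ⟨x₀, mem_closedBall_iff_norm.1 hx₀, hball.1 hmin⟩
  · obtain ⟨μbar, hμbar, H⟩ := hconv hδ
    exact ⟨μbar, hμbar, fun μ hμ hμbar y hy x₀ hx₀ =>
      H ⟨hμ.1, hμbar⟩ y hy x₀ (mem_closedBall_iff_norm.2 hx₀.1) (hball.2 hx₀.2)⟩
  · obtain ⟨μbar, hμbar, H⟩ := hconv (half_pos hr)
    refine ⟨μbar, hμbar, fun μ hμ hμbar y hy x₀ hx₀ =>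
      ⟨r / 2, half_pos hr, fun x hx => hx₀.2 x ?_⟩⟩
    have hnear := H ⟨hμ.1, hμbar⟩ y hy x₀ (mem_closedBall_iff_norm.2 hx₀.1) (hball.2 hx₀.2)
    calc ‖x - xbar‖ ≤ ‖x - x₀‖ + ‖x₀ - xbar‖ := norm_sub_le_norm_sub_add_norm_sub x x₀ xbar
      _ ≤ r := by linarith

theorem statement16 {n m : ℕ}
    (f : Euc n → ℝ) (c : Euc n → Euc m) (g : Euc m → EReal)
    (hf : ContDiff ℝ 2 f) (hc : ContDiff ℝ 2 c)
    (hgp : ProperFn g) (hglsc : LowerSemicontinuous g) (hgpb : ProxBounded g)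
    (hphi : ∃ r : ℝ, (⨅ x : Euc n, ((f x : EReal) + g (c x))) = (r : EReal))
    (xbar : Euc n) (hmin : StrictLocalMin f c g xbar)
    (Y : Set (Euc m)) (hYne : Y.Nonempty) (hYbdd : IsBounded Y) :
    ∃ r : ℝ, 0 < r ∧
      (∀ yhat ∈ Y, ∀ μ : ℝ, BelowThreshold g μ →
        ∃ x₀ : Euc n, ‖x₀ - xbar‖ ≤ r ∧
          ∀ x : Euc n, ‖x - xbar‖ ≤ r → ALfun f c g μ x₀ yhat ≤ ALfun f c g μ x yhat) ∧
      (∀ δ : ℝ, 0 < δ → ∃ μbar : ℝ, 0 < μbar ∧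
        ∀ μ : ℝ, BelowThreshold g μ → μ < μbar → ∀ yhat ∈ Y, ∀ x₀ : Euc n,
          (‖x₀ - xbar‖ ≤ r ∧
            ∀ x : Euc n, ‖x - xbar‖ ≤ r → ALfun f c g μ x₀ yhat ≤ ALfun f c g μ x yhat) →
          ‖x₀ - xbar‖ ≤ δ) ∧
      (∃ μbar : ℝ, 0 < μbar ∧
        ∀ μ : ℝ, BelowThreshold g μ → μ < μbar → ∀ yhat ∈ Y, ∀ x₀ : Euc n,
          (‖x₀ - xbar‖ ≤ r ∧
            ∀ x : Euc n, ‖x - xbar‖ ≤ r → ALfun f c g μ x₀ yhat ≤ ALfun f c g μ x yhat) →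
          ∃ ρ : ℝ, 0 < ρ ∧ ∀ x : Euc n, ‖x - x₀‖ ≤ ρ →
            ALfun f c g μ x₀ yhat ≤ ALfun f c g μ x yhat) :=
  statement16_general f c g hf hc hglsc hgpb xbar hmin Y hYbdd

end Paper
end
end
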